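/- Let ν > 2 and set k = √(ν² − 4)/ν. Then, as x → ∞, ∫₀ˣ √(ν² − 2 + 2·cosh(2s)) ds = ν·(K(k) − E(k)) + eˣ + O(e^{−x}); that is, the function x ↦ ∫₀ˣ √(ν² − 2 + 2·cosh(2s)) ds − ν·(K(k) − E(k)) − eˣ is O(e^{−x}) as x → ∞. -/

import Mathlib

open Real Filter Asymptotics

/-- Complete elliptic integral of the first kind. -/
noncomputable def ellipticK (k : ℝ) : ℝ :=
  ∫ θ in (0:ℝ)..(Real.pi / 2), 1 / Real.sqrt (1 - k ^ 2 * Real.sin θ ^ 2)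

/-- Complete elliptic integral of the second kind. -/
noncomputable def ellipticE (k : ℝ) : ℝ :=
  ∫ θ in (0:ℝ)..(Real.pi / 2), Real.sqrt (1 - k ^ 2 * Real.sin θ ^ 2)

/-!
Since `ν² - 2 + 2 cosh 2s = ν² + 4 sinh² s`, the integrand has the explicit primitive
`ν (F - E)(gd x, k) + tanh x (√(ν² + 4 sinh² x) - 2 cosh x) + 2 sinh x`, where `gd` is the
Gudermannian and `F`, `E` are the incomplete elliptic integrals. Differentiating it uses
`sin (gd x) = tanh x` and `√(1 - k² tanh² x) = √(ν² + 4 sinh² x) / (ν cosh x)`, which is where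
the modulus `k² = 1 - 4/ν²` comes from.

As `x → ∞`, `gd x → π/2` at rate `e^{-x}` (Jordan's inequality applied to `π/2 - gd x`, whose
sine is `1 / cosh x`), so the first term is `ν (K - E) + O(e^{-x})`. The second is `O(e^{-x})`
because `√(ν² + 4 sinh² x) - 2 cosh x = (ν² - 4) / (√(ν² + 4 sinh² x) + 2 cosh x)`, and
`2 sinh x = eˣ - e^{-x}`.
-/

open Topology

noncomputable def gudermannian (x : ℝ) : ℝ := arctan (sinh x)

lemma gudermannian_zero : gudermannian 0 = 0 := by simp [gudermannian]

lemma gudermannian_lt_pi_div_two (x : ℝ) : gudermannian x < π / 2 := arctan_lt_pi_div_two _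

lemma gudermannian_nonneg {x : ℝ} (hx : 0 ≤ x) : 0 ≤ gudermannian x :=
  arctan_nonneg.2 (sinh_nonneg_iff.2 hx)

lemma sqrt_one_add_sinh_sq (x : ℝ) : √(1 + sinh x ^ 2) = cosh x := by
  rw [add_comm, ← cosh_sq, sqrt_sq (cosh_pos x).le]

lemma sin_gudermannian (x : ℝ) : sin (gudermannian x) = tanh x := by
  rw [gudermannian, sin_arctan, sqrt_one_add_sinh_sq, tanh_eq_sinh_div_cosh]

lemma cos_gudermannian (x : ℝ) : cos (gudermannian x) = (cosh x)⁻¹ := by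
  rw [gudermannian, cos_arctan, sqrt_one_add_sinh_sq, one_div]

lemma hasDerivAt_gudermannian (x : ℝ) : HasDerivAt gudermannian (cosh x)⁻¹ x := by
  refine ((hasDerivAt_arctan (sinh x)).comp x (hasDerivAt_sinh x)).congr_deriv ?_
  rw [add_comm, ← cosh_sq]
  field_simp [(cosh_pos x).ne']

lemma hasDerivAt_tanh (x : ℝ) : HasDerivAt tanh (cosh x ^ 2)⁻¹ x := by
  rw [show tanh = fun y ↦ sinh y / cosh y from funext tanh_eq_sinh_div_cosh]
  refine ((hasDerivAt_sinh x).div (hasDerivAt_cosh x) (cosh_pos x).ne').congr_deriv ?_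
  rw [← sq, ← sq, cosh_sq]
  ring

lemma inv_cosh_le_two_mul_exp_neg (x : ℝ) : (cosh x)⁻¹ ≤ 2 * exp (-x) := by
  have hexp : exp (-x) * exp x = 1 := by rw [← exp_add, neg_add_cancel, exp_zero]
  rw [inv_le_iff_one_le_mul₀ (cosh_pos x), cosh_eq]
  nlinarith [exp_pos (-x)]

lemma pi_div_two_sub_gudermannian_le {x : ℝ} (hx : 0 ≤ x) :
    π / 2 - gudermannian x ≤ π * exp (-x) := by
  have hjordan := mul_le_sin (sub_nonneg.2 (gudermannian_lt_pi_div_two x).le)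
    (by linarith [gudermannian_nonneg hx] : π / 2 - gudermannian x ≤ π / 2)
  rw [sin_pi_div_two_sub, cos_gudermannian] at hjordan
  calc π / 2 - gudermannian x = π / 2 * (2 / π * (π / 2 - gudermannian x)) := by
        field_simp
    _ ≤ π / 2 * (2 * exp (-x)) :=
        mul_le_mul_of_nonneg_left (hjordan.trans (inv_cosh_le_two_mul_exp_neg x))
          pi_div_two_pos.le
    _ = π * exp (-x) := by ring

lemma isBigO_gudermannian_sub_pi_div_two :
    (fun x ↦ gudermannian x - π / 2) =O[atTop] fun x ↦ exp (-x) := by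
  refine IsBigO.of_bound π ?_
  filter_upwards [eventually_ge_atTop 0] with x hx
  rw [norm_sub_rev, norm_of_nonneg (sub_nonneg.2 (gudermannian_lt_pi_div_two x).le),
    norm_of_nonneg (exp_pos _).le]
  exact pi_div_two_sub_gudermannian_le hx

lemma tendsto_gudermannian_atTop : Tendsto gudermannian atTop (𝓝 (π / 2)) := by
  have := isBigO_gudermannian_sub_pi_div_two.trans_tendsto
    (by simpa using tendsto_exp_neg_atTop_nhds_zero)
  simpa using this.add_const (π / 2)

noncomputable def ellipticFSubE (k φ : ℝ) : ℝ :=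
  ∫ θ in (0:ℝ)..φ, (1 / √(1 - k ^ 2 * sin θ ^ 2) - √(1 - k ^ 2 * sin θ ^ 2))

section ellipticFSubE

variable {k : ℝ}

lemma one_sub_sq_mul_sin_sq_pos (hk : k ^ 2 < 1) (θ : ℝ) : 0 < 1 - k ^ 2 * sin θ ^ 2 := by
  nlinarith [sin_sq_le_one θ, sq_nonneg k]

lemma continuous_one_div_sqrt_one_sub_sq_mul_sin_sq (hk : k ^ 2 < 1) :
    Continuous fun θ ↦ 1 / √(1 - k ^ 2 * sin θ ^ 2) :=
  continuous_const.div (by fun_prop) fun θ ↦ (sqrt_pos.2 (one_sub_sq_mul_sin_sq_pos hk θ)).ne'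

lemma ellipticK_sub_ellipticE (hk : k ^ 2 < 1) :
    ellipticK k - ellipticE k = ellipticFSubE k (π / 2) :=
  (intervalIntegral.integral_sub
    ((continuous_one_div_sqrt_one_sub_sq_mul_sin_sq hk).intervalIntegrable _ _)
    ((by fun_prop : Continuous fun θ ↦ √(1 - k ^ 2 * sin θ ^ 2)).intervalIntegrable _ _)).symm

lemma hasDerivAt_ellipticFSubE (hk : k ^ 2 < 1) (φ : ℝ) :
    HasDerivAt (ellipticFSubE k)
      (1 / √(1 - k ^ 2 * sin φ ^ 2) - √(1 - k ^ 2 * sin φ ^ 2)) φ := by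
  have hcont : Continuous fun θ ↦ 1 / √(1 - k ^ 2 * sin θ ^ 2) - √(1 - k ^ 2 * sin θ ^ 2) :=
    (continuous_one_div_sqrt_one_sub_sq_mul_sin_sq hk).sub (by fun_prop)
  exact intervalIntegral.integral_hasDerivAt_right (hcont.intervalIntegrable _ _)
    (hcont.stronglyMeasurableAtFilter _ _) hcont.continuousAt

lemma isBigO_ellipticFSubE_gudermannian_sub (hk : k ^ 2 < 1) :
    (fun x ↦ ellipticFSubE k (gudermannian x) - ellipticFSubE k (π / 2)) =O[atTop]
      fun x ↦ exp (-x) :=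
  ((hasDerivAt_ellipticFSubE hk _).hasFDerivAt.isBigO_sub.comp_tendsto
    tendsto_gudermannian_atTop).trans isBigO_gudermannian_sub_pi_div_two

end ellipticFSubE

lemma sqrt_sq_sub_two_add_two_mul_cosh_two_mul (ν s : ℝ) :
    √(ν ^ 2 - 2 + 2 * cosh (2 * s)) = √(ν ^ 2 + 4 * sinh s ^ 2) := by
  rw [cosh_two_mul, cosh_sq]
  congr 1
  ring

lemma abs_sqrt_sq_add_four_sinh_sq_sub_two_cosh_le (ν x : ℝ) :
    |√(ν ^ 2 + 4 * sinh x ^ 2) - 2 * cosh x| ≤ |ν ^ 2 - 4| * exp (-x) := by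
  set g := √(ν ^ 2 + 4 * sinh x ^ 2)
  have hg : g ^ 2 = ν ^ 2 + 4 * sinh x ^ 2 := sq_sqrt (by positivity)
  have hsum : exp x ≤ g + 2 * cosh x := by
    rw [cosh_eq]
    linarith [sqrt_nonneg (ν ^ 2 + 4 * sinh x ^ 2), exp_pos (-x)]
  have hprod : (g - 2 * cosh x) * (g + 2 * cosh x) = ν ^ 2 - 4 := by
    linear_combination hg - 4 * cosh_sq x
  calc |g - 2 * cosh x| = |ν ^ 2 - 4| / (g + 2 * cosh x) := by
        rw [eq_div_iff (by linarith [exp_pos x]), ← hprod, abs_mul,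
          abs_of_pos (by linarith [exp_pos x] : 0 < g + 2 * cosh x)]
    _ ≤ |ν ^ 2 - 4| / exp x := div_le_div_of_nonneg_left (abs_nonneg _) (exp_pos x) hsum
    _ = |ν ^ 2 - 4| * exp (-x) := by rw [exp_neg, div_eq_mul_inv]

lemma isBigO_tanh_mul_sqrt_sq_add_four_sinh_sq_sub_two_cosh (ν : ℝ) :
    (fun x ↦ tanh x * (√(ν ^ 2 + 4 * sinh x ^ 2) - 2 * cosh x)) =O[atTop]
      fun x ↦ exp (-x) := by
  refine IsBigO.of_bound |ν ^ 2 - 4| (Eventually.of_forall fun x ↦ ?_)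
  rw [norm_mul, norm_of_nonneg (exp_pos _).le]
  calc ‖tanh x‖ * ‖√(ν ^ 2 + 4 * sinh x ^ 2) - 2 * cosh x‖
      ≤ 1 * (|ν ^ 2 - 4| * exp (-x)) :=
        mul_le_mul (abs_tanh_lt_one x).le (abs_sqrt_sq_add_four_sinh_sq_sub_two_cosh_le ν x)
          (norm_nonneg _) zero_le_one
    _ = |ν ^ 2 - 4| * exp (-x) := one_mul _

section primitive

variable {ν k : ℝ}

lemma hasDerivAt_sqrt_sq_add_four_sinh_sq (hν : ν ≠ 0) (x : ℝ) :
    HasDerivAt (fun y ↦ √(ν ^ 2 + 4 * sinh y ^ 2))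
      (4 * sinh x * cosh x / √(ν ^ 2 + 4 * sinh x ^ 2)) x := by
  have hpos : 0 < ν ^ 2 + 4 * sinh x ^ 2 := by positivity
  have hinner : HasDerivAt (fun y ↦ ν ^ 2 + 4 * sinh y ^ 2) (4 * (2 * sinh x * cosh x)) x := by
    simpa using (((hasDerivAt_sinh x).pow 2).const_mul 4).const_add (ν ^ 2)
  refine (hinner.sqrt hpos.ne').congr_deriv ?_
  field_simp

lemma sqrt_one_sub_sq_mul_tanh_sq (hν : 0 < ν) (hkν : k ^ 2 * ν ^ 2 = ν ^ 2 - 4) (x : ℝ) :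
    √(1 - k ^ 2 * tanh x ^ 2) = √(ν ^ 2 + 4 * sinh x ^ 2) / (ν * cosh x) := by
  have hc := (cosh_pos x).ne'
  rw [eq_div_iff (by positivity), ← sqrt_sq (by positivity : 0 ≤ ν * cosh x), ← sqrt_mul']
  · congr 1
    rw [tanh_eq_sinh_div_cosh]
    field_simp
    linear_combination (-sinh x ^ 2) * hkν + ν ^ 2 * cosh_sq x
  · positivity

noncomputable def sqrtCoshPrimitive (ν k x : ℝ) : ℝ :=
  ν * ellipticFSubE k (gudermannian x) + tanh x * (√(ν ^ 2 + 4 * sinh x ^ 2) - 2 * cosh x)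
    + 2 * sinh x

lemma sqrtCoshPrimitive_zero : sqrtCoshPrimitive ν k 0 = 0 := by
  simp [sqrtCoshPrimitive, gudermannian_zero, ellipticFSubE]

lemma hasDerivAt_sqrtCoshPrimitive (hν : 0 < ν) (hkν : k ^ 2 * ν ^ 2 = ν ^ 2 - 4) (x : ℝ) :
    HasDerivAt (sqrtCoshPrimitive ν k) √(ν ^ 2 + 4 * sinh x ^ 2) x := by
  have hk : k ^ 2 < 1 := by nlinarith
  have hF := ((hasDerivAt_ellipticFSubE hk _).comp x (hasDerivAt_gudermannian x)).const_mul ν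
  have hG := (hasDerivAt_tanh x).mul
    ((hasDerivAt_sqrt_sq_add_four_sinh_sq hν.ne' x).sub ((hasDerivAt_cosh x).const_mul 2))
  refine ((hF.add hG).add ((hasDerivAt_sinh x).const_mul 2)).congr_deriv ?_
  simp only [Pi.sub_apply]
  rw [sin_gudermannian, sqrt_one_sub_sq_mul_tanh_sq hν hkν, tanh_eq_sinh_div_cosh]
  have hg : √(ν ^ 2 + 4 * sinh x ^ 2) ^ 2 = ν ^ 2 + 4 * sinh x ^ 2 := sq_sqrt (by positivity)
  have hg0 : 0 < √(ν ^ 2 + 4 * sinh x ^ 2) := sqrt_pos.2 (by positivity)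
  have hc := (cosh_pos x).ne'
  field_simp
  linear_combination (-cosh x ^ 2) * hg + (2 * cosh x * √(ν ^ 2 + 4 * sinh x ^ 2)) * cosh_sq x

lemma integral_sqrt_sq_add_four_sinh_sq (hν : 0 < ν) (hkν : k ^ 2 * ν ^ 2 = ν ^ 2 - 4)
    (x : ℝ) : ∫ s in (0:ℝ)..x, √(ν ^ 2 + 4 * sinh s ^ 2) = sqrtCoshPrimitive ν k x := by
  rw [intervalIntegral.integral_eq_sub_of_hasDerivAt
    (fun s _ ↦ hasDerivAt_sqrtCoshPrimitive hν hkν s)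
    ((by fun_prop : Continuous fun s ↦ √(ν ^ 2 + 4 * sinh s ^ 2)).intervalIntegrable _ _),
    sqrtCoshPrimitive_zero, sub_zero]

end primitive

/-- For `ν > 2` and `k = √(ν² − 4)/ν`, as `x → ∞`,
`∫₀ˣ √(ν² − 2 + 2 cosh 2s) ds = ν(K(k) − E(k)) + eˣ + O(e^{−x})`. -/
theorem stmt_3 (ν : ℝ) (hν : 2 < ν) (k : ℝ) (hk : k = Real.sqrt (ν ^ 2 - 4) / ν) :
    (fun x : ℝ =>
        (∫ s in (0:ℝ)..x, Real.sqrt (ν ^ 2 - 2 + 2 * Real.cosh (2 * s)))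
          - ν * (ellipticK k - ellipticE k) - Real.exp x)
      =O[atTop] (fun x => Real.exp (-x)) := by
  have hν0 : 0 < ν := by linarith
  have hkν : k ^ 2 * ν ^ 2 = ν ^ 2 - 4 := by
    rw [hk, div_pow, sq_sqrt (by nlinarith)]
    field_simp
  have hk1 : k ^ 2 < 1 := by nlinarith
  have hdecomp : ∀ x, (∫ s in (0:ℝ)..x, √(ν ^ 2 - 2 + 2 * cosh (2 * s)))
      - ν * (ellipticK k - ellipticE k) - exp x
      = ν * (ellipticFSubE k (gudermannian x) - ellipticFSubE k (π / 2))
        + tanh x * (√(ν ^ 2 + 4 * sinh x ^ 2) - 2 * cosh x) - exp (-x) := fun x ↦ by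
    simp_rw [sqrt_sq_sub_two_add_two_mul_cosh_two_mul, integral_sqrt_sq_add_four_sinh_sq hν0 hkν,
      ellipticK_sub_ellipticE hk1, sqrtCoshPrimitive, sinh_eq]
    ring
  simp_rw [hdecomp]
  exact (((isBigO_ellipticFSubE_gudermannian_sub hk1).const_mul_left ν).add
    (isBigO_tanh_mul_sqrt_sq_add_four_sinh_sq_sub_two_cosh ν)).sub (isBigO_refl _ _)
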